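/- For all integers n ≥ 8, the 7-tuple (g_0(n), ..., g_6(n)) with g_i(n) = g_{6-i}(n), g_0 = (n-3)(n^2-12n+41)/3, g_1 = (7n^3-102n^2+515n-840)/6, g_2 = (5n^3-66n^2+313n-504)/3, g_3 = 5(n-4)(n^2-8n+21)/3, is logarithmically convex: g_k^2 ≥ g_{k-1} g_{k+1} for all 1 ≤ k ≤ 5. -/
import Mathlib


theorem stmt_18 (n : ℤ) (hn : 8 ≤ n) (g : ℕ → ℝ)
    (hsym : ∀ i ≤ 6, g i = g (6 - i))
    (hg0 : g 0 = ((n : ℝ) - 3) * ((n : ℝ) ^ 2 - 12 * n + 41) / 3)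
    (hg1 : g 1 = (7 * (n : ℝ) ^ 3 - 102 * (n : ℝ) ^ 2 + 515 * n - 840) / 6)
    (hg2 : g 2 = (5 * (n : ℝ) ^ 3 - 66 * (n : ℝ) ^ 2 + 313 * n - 504) / 3)
    (hg3 : g 3 = 5 * ((n : ℝ) - 4) * ((n : ℝ) ^ 2 - 8 * n + 21) / 3) :
    ∀ k, 1 ≤ k → k ≤ 5 → g k ^ 2 ≥ g (k - 1) * g (k + 1) := by
  have hx : (8 : ℝ) ≤ (n : ℝ) := by exact_mod_cast hn
  have ht : (0:ℝ) ≤ (n:ℝ) - 8 := by linarith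
  have h2 : (0:ℝ) ≤ ((n:ℝ) - 8)^2 := by positivity
  have h3 : (0:ℝ) ≤ ((n:ℝ) - 8)^3 := by positivity
  have h4 : (0:ℝ) ≤ ((n:ℝ) - 8)^4 := by positivity
  have h5 : (0:ℝ) ≤ ((n:ℝ) - 8)^5 := by positivity
  have h6 : (0:ℝ) ≤ ((n:ℝ) - 8)^6 := by positivity
  have hg4 : g 4 = g 2 := by have := hsym 4 (by norm_num); simpa using this
  have hg5 : g 5 = g 1 := by have := hsym 5 (by norm_num); simpa using this
  have hg6 : g 6 = g 0 := by have := hsym 6 (by norm_num); simpa using this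
  intro k hk1 hk5
  interval_cases k <;>
    simp only [hg0, hg1, hg2, hg3, hg4, hg5, hg6] <;>
    nlinarith [ht, h2, h3, h4, h5, h6]
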